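/- Let n and k be integers with 2 ≤ k and 2k ≤ n. Then the domination number of the k-token graph of the complete graph satisfies (1/k²)·C(n, k−1) < γ(F_k(K_n)) ≤ (1/k)·C(n, k−1), where C(n, k−1) denotes the binomial coefficient n choose k−1. -/

import Mathlib

/-- The `k`-token graph of a simple graph `G`: vertices are the `k`-element
subsets of `V(G)`, and two subsets are adjacent when their symmetric difference
is a pair `{u, v}` of adjacent vertices of `G`. -/
def tokenGraph {V : Type*} [DecidableEq V] (G : SimpleGraph V) (k : ℕ) :
    SimpleGraph {A : Finset V // A.card = k} where
  Adj A B := ∃ u v : V, G.Adj u v ∧ symmDiff A.1 B.1 = {u, v}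
  symm := by
    constructor
    rintro A B ⟨u, v, huv, h⟩
    exact ⟨u, v, huv, by rwa [symmDiff_comm]⟩
  loopless := by
    constructor
    rintro A ⟨u, v, huv, h⟩
    rw [symmDiff_self] at h
    have : u ∈ (⊥ : Finset V) := h ▸ Finset.mem_insert_self u {v}
    simp at this

/-- A dominating set: every vertex is in `D` or adjacent to a vertex of `D`. -/
def IsDominatingSet {V : Type*} (G : SimpleGraph V) (D : Set V) : Prop :=
  ∀ v : V, v ∈ D ∨ ∃ u ∈ D, G.Adj u v

/-- The domination number: minimum cardinality of a dominating set. -/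
noncomputable def dominationNumber {V : Type*} [Fintype V] (G : SimpleGraph V) : ℕ :=
  sInf {m : ℕ | ∃ D : Finset V, IsDominatingSet G ↑D ∧ D.card = m}

/-- The star graph `S n` with vertex set `{0, 1, …, n}`, center `0` adjacent to
each leaf `1, …, n`. -/
def starGraph (n : ℕ) : SimpleGraph (Fin (n + 1)) where
  Adj u v := u ≠ v ∧ (u = 0 ∨ v = 0)
  symm := by constructor; rintro u v ⟨h1, h2⟩; exact ⟨h1.symm, h2.symm⟩
  loopless := by constructor; rintro u ⟨h1, _⟩; exact h1 rfl

/-!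
Lower bound: a vertex of `F_k(Kₙ)` has `k(n-k)` neighbours, so `γ (1 + k(n-k)) ≥ C(n,k)`, and
`k C(n,k) = (n-k+1) C(n,k-1)`.

Upper bound: view the ground set as a cyclic group `G` of order `n`. For `c ∈ G` let `D_c` be the
set of `k`-sets `A` fixed by the translation by `t = c - ∑ A`. If `A ∉ D_c`, some `a ∈ A` has
`a + t ∉ A`, and swapping `a` for `a + t` gives a neighbour of `A` with sum `c`, which lies in
`D_c`; so every `D_c` dominates. Summing over `c`, `∑_c |D_c| = ∑_t #{A | t + A = A}`. The term
`t = 0` is `C(n,k)`; a nonzero `t` fixes a `k`-set only if its order `d ≥ 2` divides `k`, there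
are at most `k - 1` such `t`, and the `k`-sets fixed by `t` are unions of `k/d` cosets of `⟨t⟩`, at
most `C(n/d, k/d) ≤ C(n,k-1)/k` of them. Averaging over `c` gives
`n γ ≤ C(n,k) + (k-1) C(n,k-1)/k = n C(n,k-1)/k`.
-/

open Finset Pointwise

section Domination

variable {V : Type*} [Fintype V]

lemma dominationNumber_le_card {G : SimpleGraph V} {D : Finset V} (hD : IsDominatingSet G D) :
    dominationNumber G ≤ #D :=
  Nat.sInf_le ⟨D, hD, rfl⟩

lemma exists_isDominatingSet_card_eq_dominationNumber (G : SimpleGraph V) :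
    ∃ D : Finset V, IsDominatingSet G D ∧ #D = dominationNumber G :=
  Nat.sInf_mem (s := {m | ∃ D : Finset V, IsDominatingSet G D ∧ #D = m})
    ⟨#(univ : Finset V), univ, fun _ => Or.inl (mem_coe.mpr (mem_univ _)), rfl⟩

end Domination

section TokenGraph

variable {V : Type*} [DecidableEq V]

lemma symmDiff_insert_erase {A : Finset V} {a b : V} (ha : a ∈ A) (hb : b ∉ A) :
    symmDiff (insert b (A.erase a)) A = {b, a} := by
  ext x
  simp only [mem_symmDiff, mem_insert, mem_erase, mem_singleton]
  grind

lemma card_insert_erase_of_notMem {A : Finset V} {a b : V} (ha : a ∈ A) (hb : b ∉ A) :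
    #(insert b (A.erase a)) = #A := by
  rw [card_insert_of_notMem fun h => hb (mem_of_mem_erase h), card_erase_add_one ha]

lemma tokenGraph_top_adj_insert_erase {k : ℕ} {A : {A : Finset V // #A = k}} {a b : V}
    (ha : a ∈ A.1) (hb : b ∉ A.1) :
    (tokenGraph (⊤ : SimpleGraph V) k).Adj
      ⟨insert b (A.1.erase a), (card_insert_erase_of_notMem ha hb).trans A.2⟩ A :=
  ⟨b, a, (SimpleGraph.top_adj b a).mpr fun hba => hb (hba ▸ ha), symmDiff_insert_erase ha hb⟩

lemma tokenGraph_adj_exists_insert_erase {G : SimpleGraph V} {k : ℕ}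
    {A C : {A : Finset V // #A = k}} (h : (tokenGraph G k).Adj A C) :
    ∃ a ∈ A.1, ∃ b ∉ A.1, C.1 = insert b (A.1.erase a) := by
  obtain ⟨u, v, huv, hAC⟩ := h
  have hcard : #(A.1 \ C.1) + #(C.1 \ A.1) = 2 := by
    rw [← card_union_of_disjoint disjoint_sdiff_sdiff, ← card_pair huv.ne, ← hAC]
    rfl
  have hsame : #(A.1 \ C.1) = #(C.1 \ A.1) := card_sdiff_comm (A.2.trans C.2.symm)
  obtain ⟨a, ha⟩ := card_eq_one.mp (show #(A.1 \ C.1) = 1 by omega)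
  obtain ⟨b, hb⟩ := card_eq_one.mp (show #(C.1 \ A.1) = 1 by omega)
  simp only [Finset.ext_iff, mem_sdiff, mem_singleton] at ha hb
  refine ⟨a, ((ha a).mpr rfl).1, b, ((hb b).mpr rfl).2, ?_⟩
  ext x
  simp only [mem_insert, mem_erase]
  grind

variable [Fintype V]

open Classical in
lemma card_tokenGraph_adj_le (G : SimpleGraph V) (k : ℕ) (B : {A : Finset V // #A = k}) :
    #{C | (tokenGraph G k).Adj B C} ≤ k * (Fintype.card V - k) := by
  calc #{C | (tokenGraph G k).Adj B C}
      ≤ #((B.1 ×ˢ B.1ᶜ).image fun p => insert p.2 (B.1.erase p.1)) := by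
        refine card_le_card_of_injOn Subtype.val (fun C hC => ?_) Subtype.val_injective.injOn
        obtain ⟨a, ha, b, hb, hC⟩ :=
          tokenGraph_adj_exists_insert_erase (mem_filter.mp (mem_coe.mp hC)).2
        exact mem_image.mpr ⟨(a, b), mem_product.mpr ⟨ha, mem_compl.mpr hb⟩, hC.symm⟩
    _ ≤ #(B.1 ×ˢ B.1ᶜ) := card_image_le
    _ = k * (Fintype.card V - k) := by rw [card_product, card_compl, B.2]

lemma choose_card_le_card_mul_of_isDominatingSet {G : SimpleGraph V} {k : ℕ}
    {D : Finset {A : Finset V // #A = k}} (hD : IsDominatingSet (tokenGraph G k) D) :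
    (Fintype.card V).choose k ≤ #D * (1 + k * (Fintype.card V - k)) := by
  classical
  calc (Fintype.card V).choose k = #(univ : Finset {A : Finset V // #A = k}) := by
        rw [card_univ, Fintype.card_finset_len]
    _ ≤ #(D.biUnion fun B => insert B ({C | (tokenGraph G k).Adj B C} : Finset _)) := by
        refine card_le_card fun A _ => ?_
        simp only [mem_biUnion, mem_insert, mem_filter, mem_univ, true_and]
        rcases hD A with hA | ⟨B, hB, hBA⟩
        · exact ⟨A, hA, Or.inl rfl⟩
        · exact ⟨B, hB, Or.inr hBA⟩
    _ ≤ ∑ B ∈ D, #(insert B ({C | (tokenGraph G k).Adj B C} : Finset _)) := card_biUnion_le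
    _ ≤ ∑ _B ∈ D, (1 + k * (Fintype.card V - k)) := sum_le_sum fun B _ =>
        (card_insert_le _ _).trans (by have := card_tokenGraph_adj_le G k B; omega)
    _ = #D * (1 + k * (Fintype.card V - k)) := by rw [sum_const, smul_eq_mul]

end TokenGraph

section Binomial

lemma choose_mul_choose_le_add_choose (a b i j : ℕ) :
    a.choose i * b.choose j ≤ (a + b).choose (i + j) := by
  rw [Nat.add_choose_eq]
  exact single_le_sum (f := fun p : ℕ × ℕ => a.choose p.1 * b.choose p.2)
    (fun _ _ => Nat.zero_le _) (mem_antidiagonal.mpr rfl : (i, j) ∈ antidiagonal (i + j))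

lemma choose_le_choose_of_le_of_le_half {n r s : ℕ} (hrs : r ≤ s) (hs : s ≤ n / 2) :
    n.choose r ≤ n.choose s := by
  induction s, hrs using Nat.le_induction with
  | base => rfl
  | succ s _ ih => exact (ih (by omega)).trans (Nat.choose_le_succ_of_lt_half_left (by omega))

lemma le_choose_of_pos_of_lt {n r : ℕ} (h0 : 0 < r) (hr : r < n) : n ≤ n.choose r := by
  rcases le_or_gt r (n / 2) with h | h
  · simpa using choose_le_choose_of_le_of_le_half h0 h
  · rw [← Nat.choose_symm hr.le]
    simpa using choose_le_choose_of_le_of_le_half (by omega : 1 ≤ n - r) (by omega)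

lemma mul_choose_div_le_choose_pred {n k d : ℕ} (hd : 2 ≤ d) (hdn : d ∣ n) (hdk : d ∣ k)
    (hk : 2 ≤ k) (hkn : 2 * k ≤ n) : k * (n / d).choose (k / d) ≤ n.choose (k - 1) := by
  obtain ⟨m, rfl⟩ := hdn
  obtain ⟨j, rfl⟩ := hdk
  rw [Nat.mul_div_cancel_left _ (by omega), Nat.mul_div_cancel_left _ (by omega)]
  have hm : 2 * m ≤ d * m := Nat.mul_le_mul_right m hd
  have hj : 2 * j ≤ d * j := Nat.mul_le_mul_right j hd
  have hj0 : 0 < j := Nat.pos_of_ne_zero (by rintro rfl; simp at hk)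
  rcases (show d * j = 2 ∨ 3 ≤ d * j by omega) with h2 | h3
  · obtain rfl : j = 1 := by omega
    obtain rfl : d = 2 := by simpa using h2
    simp
  calc d * j * m.choose j ≤ (d * m - m) * m.choose j := by gcongr; omega
    _ ≤ (d * m - m).choose (d * j - 1 - j) * m.choose j := by
        gcongr; exact le_choose_of_pos_of_lt (by omega) (by omega)
    _ ≤ (m + (d * m - m)).choose (j + (d * j - 1 - j)) := by
        rw [mul_comm]; exact choose_mul_choose_le_add_choose _ _ _ _
    _ = (d * m).choose (d * j - 1) := by congr 1 <;> omega

lemma mul_choose_add_pred_mul_choose_pred {n k : ℕ} (hk : 1 ≤ k) (hkn : k ≤ n) :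
    k * n.choose k + (k - 1) * n.choose (k - 1) = n * n.choose (k - 1) := by
  obtain ⟨j, rfl⟩ : ∃ j, k = j + 1 := ⟨k - 1, by omega⟩
  have hpascal := Nat.choose_succ_right_eq n j
  rw [Nat.add_sub_cancel, mul_comm, hpascal, mul_comm j, ← mul_add, Nat.sub_add_cancel (by omega),
    mul_comm]

lemma choose_pred_lt_sq_mul {n k m : ℕ} (hk : 2 ≤ k) (hkn : k ≤ n)
    (h : n.choose k ≤ m * (1 + k * (n - k))) : n.choose (k - 1) < k ^ 2 * m := by
  obtain ⟨j, rfl⟩ : ∃ j, k = j + 1 := ⟨k - 1, by omega⟩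
  obtain ⟨l, rfl⟩ : ∃ l, n = j + 1 + l := ⟨n - (j + 1), by omega⟩
  have hpascal := Nat.choose_succ_right_eq (j + 1 + l) j
  have hpos : 0 < (j + 1 + l).choose (j + 1) := Nat.choose_pos (by omega)
  rw [show j + 1 + l - (j + 1) = l by omega] at h
  rw [show j + 1 + l - j = l + 1 by omega] at hpascal
  rw [Nat.add_sub_cancel]
  obtain rfl | hm := Nat.eq_zero_or_pos m
  · omega
  by_contra! hcon
  have key : (j + 1) * m * ((j + 1) * (l + 1)) ≤ (j + 1) * m * (1 + (j + 1) * l) := by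
    nlinarith [Nat.mul_le_mul_right (l + 1) hcon, Nat.mul_le_mul_right (j + 1) h]
  have := Nat.le_of_mul_le_mul_left key (by positivity)
  nlinarith

end Binomial

theorem choose_pred_lt_sq_mul_dominationNumber_tokenGraph {V : Type*} [Fintype V]
    [DecidableEq V] (G : SimpleGraph V) {k : ℕ} (hk : 2 ≤ k) (hkV : k ≤ Fintype.card V) :
    (Fintype.card V).choose (k - 1) < k ^ 2 * dominationNumber (tokenGraph G k) := by
  obtain ⟨D, hD, hcard⟩ := exists_isDominatingSet_card_eq_dominationNumber (tokenGraph G k)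
  rw [← hcard]
  exact choose_pred_lt_sq_mul hk hkV (choose_card_le_card_mul_of_isDominatingSet hD)

section Translation

variable {G : Type*} [AddCommGroup G] [DecidableEq G]

lemma coe_add_addSubgroup_eq_self {H : AddSubgroup G} {A : Finset G}
    (hA : H ≤ AddAction.stabilizer G A) : (A : Set G) + H = A := by
  refine subset_antisymm ?_ fun a ha => ⟨a, ha, 0, H.zero_mem, add_zero a⟩
  rintro _ ⟨a, ha, h, hh, rfl⟩
  rw [← AddAction.mem_stabilizer_iff.mp (hA hh)]
  exact mem_coe.mpr (mem_vadd_finset.mpr ⟨a, ha, add_comm h a⟩)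

lemma card_eq_natCard_mul_card_image_mk {H : AddSubgroup G} [DecidableEq (G ⧸ H)] {A : Finset G}
    (hA : H ≤ AddAction.stabilizer G A) :
    #A = Nat.card H * #(A.image ((↑) : G → G ⧸ H)) := by
  have := AddSubgroup.card_add_eq_card_addSubgroup_add_card_quotient H A
  rwa [coe_add_addSubgroup_eq_self hA, Nat.card_coe_set_eq, Set.ncard_coe_finset, ← coe_image,
    Nat.card_coe_set_eq, Set.ncard_coe_finset] at this

lemma image_mk_injOn (H : AddSubgroup G) [DecidableEq (G ⧸ H)] :
    Set.InjOn (fun A : Finset G => A.image ((↑) : G → G ⧸ H))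
      {A | H ≤ AddAction.stabilizer G A} := by
  intro A hA B hB hAB
  have hpre : ∀ C : Finset G, H ≤ AddAction.stabilizer G C →
      ((↑) : G → G ⧸ H) ⁻¹' ↑(C.image ((↑) : G → G ⧸ H)) = C := fun C hC => by
    rw [coe_image, QuotientAddGroup.preimage_image_mk_eq_add, coe_add_addSubgroup_eq_self hC]
  rw [← coe_inj, ← hpre A hA, ← hpre B hB]
  exact congrArg _ (congrArg _ hAB)

lemma addOrderOf_dvd_card_of_vadd_eq_self {t : G} {A : Finset G} (ht : t +ᵥ A = A) :
    addOrderOf t ∣ #A := by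
  classical
  rw [card_eq_natCard_mul_card_image_mk (H := AddSubgroup.zmultiples t)
    (AddSubgroup.zmultiples_le.mpr (AddAction.mem_stabilizer_iff.mpr ht)), Nat.card_zmultiples]
  exact dvd_mul_right _ _

variable [Fintype G]

lemma card_vadd_eq_self_le (t : G) (k : ℕ) :
    #{A : {A : Finset G // #A = k} | t +ᵥ A.1 = A.1} ≤
      (Fintype.card G / addOrderOf t).choose (k / addOrderOf t) := by
  classical
  set H := AddSubgroup.zmultiples t
  have hstab {A : Finset G} (hA : t +ᵥ A = A) : H ≤ AddAction.stabilizer G A :=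
    AddSubgroup.zmultiples_le.mpr (AddAction.mem_stabilizer_iff.mpr hA)
  have hH : Nat.card H = addOrderOf t := Nat.card_zmultiples t
  have hquot : Fintype.card (G ⧸ H) = Fintype.card G / addOrderOf t := by
    rw [← Nat.card_eq_fintype_card, ← Nat.card_eq_fintype_card,
      H.card_eq_card_quotient_mul_card_addSubgroup, hH, Nat.mul_div_cancel _ (addOrderOf_pos t)]
  calc _ ≤ #(powersetCard (k / addOrderOf t) (univ : Finset (G ⧸ H))) := by
        refine card_le_card_of_injOn (fun A => A.1.image ((↑) : G → G ⧸ H)) (fun A hA => ?_)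
          fun A hA B hB hAB => Subtype.ext (image_mk_injOn H (hstab (mem_filter.mp hA).2)
            (hstab (mem_filter.mp hB).2) hAB)
        have hcard := card_eq_natCard_mul_card_image_mk (hstab (mem_filter.mp (mem_coe.mp hA)).2)
        rw [A.2, hH] at hcard
        exact mem_powersetCard.mpr
          ⟨subset_univ _, (Nat.div_eq_of_eq_mul_right (addOrderOf_pos t) hcard).symm⟩
    _ = _ := by rw [card_powersetCard, card_univ, hquot]

lemma mul_card_vadd_eq_self_le {t : G} (ht : t ≠ 0) {k : ℕ} (hk : 2 ≤ k)
    (hkn : 2 * k ≤ Fintype.card G) :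
    k * #{A : {A : Finset G // #A = k} | t +ᵥ A.1 = A.1} ≤
      if k • t = 0 then (Fintype.card G).choose (k - 1) else 0 := by
  split_ifs with hkt
  · have hd : 2 ≤ addOrderOf t := by
      have := addOrderOf_pos t
      have : addOrderOf t ≠ 1 := fun h => ht (AddMonoid.addOrderOf_eq_one_iff.mp h)
      omega
    exact (Nat.mul_le_mul_left k (card_vadd_eq_self_le t k)).trans
      (mul_choose_div_le_choose_pred hd addOrderOf_dvd_card
        (addOrderOf_dvd_iff_nsmul_eq_zero.mpr hkt) hk hkn)
  · rw [card_eq_zero.mpr, mul_zero]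
    refine filter_eq_empty_iff.mpr fun A _ hA => hkt ?_
    exact addOrderOf_dvd_iff_nsmul_eq_zero.mp (A.2 ▸ addOrderOf_dvd_card_of_vadd_eq_self hA)

end Translation

section SumDominatingSet

variable {G : Type*} [AddCommGroup G] [Fintype G] [DecidableEq G]

def sumDominatingSet (k : ℕ) (c : G) : Finset {A : Finset G // #A = k} :=
  {A | (c - ∑ a ∈ A.1, a) +ᵥ A.1 = A.1}

lemma isDominatingSet_sumDominatingSet (k : ℕ) (c : G) :
    IsDominatingSet (tokenGraph ⊤ k) (sumDominatingSet k c : Set {A : Finset G // #A = k}) := by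
  intro A
  by_cases hA : A ∈ sumDominatingSet k c
  · exact Or.inl hA
  right
  set t := c - ∑ a ∈ A.1, a
  have hne : t +ᵥ A.1 ≠ A.1 := by simpa [sumDominatingSet] using hA
  obtain ⟨b, hbt, hbA⟩ := not_subset.mp fun hsub =>
    hne (eq_of_subset_of_card_le hsub (card_vadd_finset t A.1).ge)
  obtain ⟨a, ha, rfl⟩ := mem_vadd_finset.mp hbt
  refine ⟨_, ?_, tokenGraph_top_adj_insert_erase ha hbA⟩
  have hsum : ∑ x ∈ insert (t +ᵥ a) (A.1.erase a), x = c := by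
    rw [sum_insert fun h => hbA (mem_of_mem_erase h), sum_erase_eq_sub ha, vadd_eq_add]
    simp only [t]
    abel
  rw [mem_coe, sumDominatingSet, mem_filter]
  exact ⟨mem_univ _, by rw [hsum, sub_self, zero_vadd]⟩

lemma sum_card_sumDominatingSet (k : ℕ) :
    ∑ c : G, #(sumDominatingSet k c) =
      ∑ t : G, #{A : {A : Finset G // #A = k} | t +ᵥ A.1 = A.1} := by
  simp only [sumDominatingSet, card_filter]
  rw [sum_comm, sum_comm (γ := G)]
  exact sum_congr rfl fun A _ =>
    Equiv.sum_comp (Equiv.subRight (∑ a ∈ A.1, a)) fun t => if t +ᵥ A.1 = A.1 then 1 else 0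

lemma mul_sum_card_vadd_eq_self_le [IsAddCyclic G] {k : ℕ} (hk : 2 ≤ k)
    (hkn : 2 * k ≤ Fintype.card G) :
    k * ∑ t : G, #{A : {A : Finset G // #A = k} | t +ᵥ A.1 = A.1} ≤
      Fintype.card G * (Fintype.card G).choose (k - 1) := by
  set n := Fintype.card G
  have hfix_zero : #{A : {A : Finset G // #A = k} | (0 : G) +ᵥ A.1 = A.1} = n.choose k := by
    simp [n, Fintype.card_finset_len]
  have htorsion : #{t ∈ univ.erase (0 : G) | k • t = 0} ≤ k - 1 := by
    rw [filter_erase, card_erase_of_mem (by simp)]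
    have := IsAddCyclic.card_nsmul_eq_zero_le (α := G) (n := k) (by omega)
    omega
  calc k * ∑ t : G, #{A : {A : Finset G // #A = k} | t +ᵥ A.1 = A.1}
      = k * n.choose k +
          ∑ t ∈ univ.erase (0 : G), k * #{A : {A : Finset G // #A = k} | t +ᵥ A.1 = A.1} := by
        rw [← add_sum_erase _ _ (mem_univ 0), mul_add, mul_sum, hfix_zero]
    _ ≤ k * n.choose k +
          ∑ t ∈ univ.erase (0 : G), if k • t = 0 then n.choose (k - 1) else 0 := by
        gcongr with t ht
        exact mul_card_vadd_eq_self_le (ne_of_mem_erase ht) hk hkn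
    _ = k * n.choose k + #{t ∈ univ.erase (0 : G) | k • t = 0} * n.choose (k - 1) := by
        rw [sum_ite, sum_const_zero, add_zero, sum_const, smul_eq_mul]
    _ ≤ k * n.choose k + (k - 1) * n.choose (k - 1) := by gcongr
    _ = n * n.choose (k - 1) := mul_choose_add_pred_mul_choose_pred (by omega) (by omega)

theorem mul_dominationNumber_tokenGraph_top_le [IsAddCyclic G] {k : ℕ} (hk : 2 ≤ k)
    (hkn : 2 * k ≤ Fintype.card G) :
    k * dominationNumber (tokenGraph (⊤ : SimpleGraph G) k) ≤
      (Fintype.card G).choose (k - 1) := by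
  set γ := dominationNumber (tokenGraph (⊤ : SimpleGraph G) k)
  have havg : Fintype.card G * γ ≤ ∑ c : G, #(sumDominatingSet k c) := by
    rw [← smul_eq_mul, ← card_univ, ← sum_const]
    exact sum_le_sum fun c _ => dominationNumber_le_card (isDominatingSet_sumDominatingSet k c)
  refine Nat.le_of_mul_le_mul_left ?_ (Fintype.card_pos (α := G))
  calc Fintype.card G * (k * γ) = k * (Fintype.card G * γ) := by ring
    _ ≤ k * ∑ c : G, #(sumDominatingSet k c) := by gcongr
    _ ≤ Fintype.card G * (Fintype.card G).choose (k - 1) := by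
        rw [sum_card_sumDominatingSet]
        exact mul_sum_card_vadd_eq_self_le hk hkn

end SumDominatingSet

open Fin.CommRing in
instance {n : ℕ} [NeZero n] : IsAddCyclic (Fin n) :=
  ⟨1, fun x => ⟨x.val, show ((x.val : ℤ) • 1 : Fin n) = x by simp⟩⟩

/-- For `2 ≤ k` and `2k ≤ n`, the domination number of `F_k(Kₙ)` satisfies
`(1/k²)·C(n, k-1) < γ(F_k(Kₙ)) ≤ (1/k)·C(n, k-1)`. -/
theorem domination_token_complete_bounds (n k : ℕ) (hk : 2 ≤ k) (hkn : 2 * k ≤ n) :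
    (1 / (k ^ 2) : ℚ) * (n.choose (k - 1)) <
        dominationNumber (tokenGraph (⊤ : SimpleGraph (Fin n)) k) ∧
      (dominationNumber (tokenGraph (⊤ : SimpleGraph (Fin n)) k) : ℚ) ≤
        (1 / k : ℚ) * (n.choose (k - 1)) := by
  have : NeZero n := ⟨by omega⟩
  have hlower := choose_pred_lt_sq_mul_dominationNumber_tokenGraph (⊤ : SimpleGraph (Fin n)) hk
    (by rw [Fintype.card_fin]; omega)
  have hupper := mul_dominationNumber_tokenGraph_top_le (G := Fin n) hk
    (by rw [Fintype.card_fin]; exact hkn)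
  rw [Fintype.card_fin] at hlower hupper
  have hk0 : (0 : ℚ) < k := by exact_mod_cast (by omega : 0 < k)
  constructor
  · rw [one_div, inv_mul_lt_iff₀ (by positivity)]
    exact_mod_cast hlower
  · rw [one_div, le_inv_mul_iff₀ hk0]
    exact_mod_cast hupper
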